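/- Let G be a connected block graph, let v be a cut vertex of G with α(G,v) = α_min(G), and let x ≠ v be a cut vertex of G that is contained in at least two pendant cliques. Let J be one of the pendant cliques containing x, and let H = G − (V(J) \ {x}). Then α(H,v) = α_min(H) = α_min(G) − 1. -/

import Mathlib

open scoped BigOperators

namespace BlockGraphPaper

variable {V : Type*}

/-- `S` is an independent set of the graph `G`. -/
def IsIndepSet (G : SimpleGraph V) (S : Set V) : Prop :=
  S.Pairwise fun u v => ¬ G.Adj u v

/-- The independence number `α(G)`: the largest size of an independent set. -/
noncomputable def alpha (G : SimpleGraph V) : ℕ :=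
  sSup {n | ∃ S : Set V, IsIndepSet G S ∧ S.ncard = n}

/-- `α(G,v)`: the largest size of an independent set containing the vertex `v`. -/
noncomputable def alphaAt (G : SimpleGraph V) (v : V) : ℕ :=
  sSup {n | ∃ S : Set V, IsIndepSet G S ∧ v ∈ S ∧ S.ncard = n}

/-- `α_min(G) = min over vertices v of α(G,v)`. -/
noncomputable def alphaMin (G : SimpleGraph V) : ℕ :=
  ⨅ v : V, alphaAt G v

/-- The clique number `ω(G)`: the largest size of a clique. -/
noncomputable def cliqueNum (G : SimpleGraph V) : ℕ :=
  sSup {n | ∃ S : Set V, G.IsClique S ∧ S.ncard = n}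

/-- A set of vertices is 2-connected if it has at least 3 vertices, induces a
connected subgraph, and removal of any of its vertices keeps it connected
(i.e. it has no cut vertex). -/
def IsTwoConnectedSet (G : SimpleGraph V) (S : Set V) : Prop :=
  3 ≤ S.ncard ∧ (G.induce S).Connected ∧ ∀ v ∈ S, (G.induce (S \ {v})).Connected

/-- A block graph: every block (maximal 2-connected subgraph) is a clique;
equivalently, every 2-connected set of vertices is a clique. -/
def IsBlockGraph (G : SimpleGraph V) : Prop :=
  ∀ S : Set V, IsTwoConnectedSet G S → G.IsClique S

/-- A vertex is simplicial if its neighborhood is a clique. -/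
def IsSimplicial (G : SimpleGraph V) (w : V) : Prop :=
  G.IsClique (G.neighborSet w)

/-- A vertex is a cut vertex if its removal increases the number of
connected components. -/
def IsCutVertex (G : SimpleGraph V) (v : V) : Prop :=
  Nat.card G.ConnectedComponent < Nat.card (G.induce ({v}ᶜ : Set V)).ConnectedComponent

/-- A cluster graph: a disjoint union of complete graphs, i.e. every
connected component is a clique. -/
def IsClusterGraph (G : SimpleGraph V) : Prop :=
  ∀ u v : V, G.Reachable u v → u = v ∨ G.Adj u v

/-- The distance to cluster `dc(G)`: the least number of vertices whose removal
yields a cluster graph. -/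
noncomputable def dc (G : SimpleGraph V) : ℕ :=
  sInf {n | ∃ D : Set V, D.ncard = n ∧ IsClusterGraph (G.induce (Dᶜ : Set V))}

/-- A proper coloring of `G` with colors in `Fin k`. -/
def IsProperColoring (G : SimpleGraph V) {k : ℕ} (c : V → Fin k) : Prop :=
  ∀ u v : V, G.Adj u v → c u ≠ c v

/-- An equitable `k`-coloring: a proper coloring whose color classes differ
in size by at most one. -/
def IsEquitableColoring (G : SimpleGraph V) {k : ℕ} (c : V → Fin k) : Prop :=
  IsProperColoring G c ∧
    ∀ i j : Fin k, {v | c v = i}.ncard ≤ {v | c v = j}.ncard + 1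

/-- The equitable chromatic number `χ₌(G)`: the least `k` admitting an
equitable `k`-coloring. -/
noncomputable def eqChromNum (G : SimpleGraph V) : ℕ :=
  sInf {k : ℕ | ∃ c : V → Fin k, IsEquitableColoring G c}

/-- A maximal clique of a graph. -/
def IsMaximalClique (G : SimpleGraph V) (Q : Set V) : Prop :=
  G.IsClique Q ∧ ∀ R : Set V, G.IsClique R → Q ⊆ R → Q = R

/-- A pendant clique of a block graph: a maximal clique containing exactly one
cut vertex. -/
def IsPendantClique (G : SimpleGraph V) (Q : Set V) : Prop :=
  IsMaximalClique G Q ∧ ∃! y, y ∈ Q ∧ IsCutVertex G y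

/-- The closed neighborhood `N[x]` of a vertex. -/
def closedNbhd (G : SimpleGraph V) (x : V) : Set V :=
  insert x (G.neighborSet x)

/-- An AIS vertex: a vertex belonging to every maximum independent set. -/
def IsAIS (G : SimpleGraph V) (w : V) : Prop :=
  ∀ S : Set V, IsIndepSet G S → S.ncard = alpha G → w ∈ S

/-- A graph is a disjoint union of stars if every connected component has a
vertex adjacent to all other vertices of the component. -/
def IsDisjointUnionOfStars (G : SimpleGraph V) : Prop :=
  ∀ comp : G.ConnectedComponent, ∃ u : V, G.connectedComponentMk u = comp ∧
    ∀ w : V, G.connectedComponentMk w = comp → w ≠ u → G.Adj u w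

/-- The parameter sequence of a GLS block graph: flower `0` has parameter `B`
and flower `i+1` has parameter `a i`. -/
def glsPar (n B : ℕ) (a : Fin n → ℕ) : Fin (n + 1) → ℕ :=
  Fin.cases B a

/-- The vertex set of the GLS block graph `GLS(A,k,B)`: for each
`i : Fin (n+1)`, the flower `F(par i, k+1)` consists of a universal vertex
(`none`) together with `par i + 1` disjoint copies of `K_k`
(vertex `some (c, p)` is vertex `p` of copy `c`). -/
abbrev GLSV (n k B : ℕ) (a : Fin n → ℕ) : Type :=
  Σ i : Fin (n + 1), Option (Fin (glsPar n B a i + 1) × Fin k)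

/-- The GLS block graph `GLS(A,k,B)`: inside each flower the universal vertex
`⟨i, none⟩ = y_i` is joined to all other vertices of the flower and two
non-universal vertices are adjacent iff they lie in the same copy of `K_k`;
moreover `y_0` is joined to each `y_j`, `j = 1, …, n`. -/
def GLSGraph (n k B : ℕ) (a : Fin n → ℕ) : SimpleGraph (GLSV n k B a) :=
  SimpleGraph.fromRel (fun u v =>
    (u.1 = v.1 ∧ (u.2 = none ∨ v.2 = none ∨
      ∃ c : ℕ, u.2.map (fun p => (p.1 : ℕ)) = some c ∧
               v.2.map (fun p => (p.1 : ℕ)) = some c)) ∨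
    (u.2 = none ∧ v.2 = none ∧ (u.1 = 0 ∨ v.1 = 0)))

/-- The universal vertex `y_i` of the `i`-th flower of a GLS block graph. -/
def glsY (n k B : ℕ) (a : Fin n → ℕ) (i : Fin (n + 1)) : GLSV n k B a :=
  ⟨i, none⟩

/-- The graph `H` obtained from the GLS block graph by joining all the
universal vertices `y_0, y_1, …, y_n` into a clique. -/
def GLSPlus (n k B : ℕ) (a : Fin n → ℕ) : SimpleGraph (GLSV n k B a) :=
  GLSGraph n k B a ⊔ SimpleGraph.fromRel (fun u v => u.2 = none ∧ v.2 = none)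

lemma reachable_induce_of_walk {G : SimpleGraph V} {s : Set V} {a b : V}
    (p : G.Walk a b) (hp : ∀ c ∈ p.support, c ∈ s) (ha : a ∈ s) (hb : b ∈ s) :
    (G.induce s).Reachable ⟨a, ha⟩ ⟨b, hb⟩ := by
  induction p with
  | nil => rfl
  | @cons u c w h q ih =>
      have hc : c ∈ s := hp c (by simp)
      have : (G.induce s).Adj ⟨u, ha⟩ ⟨c, hc⟩ := h
      exact this.reachable.trans (ih (fun d hd => hp d (by simp [hd])) hc hb)

lemma cycle_twoConnected [Finite V] {G : SimpleGraph V} {u z w : V} (p : G.Walk u z)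
    (hp : p.IsPath) (hw : w ∉ p.support) (hwu : G.Adj w u) (hwz : G.Adj w z) (huz : u ≠ z) :
    IsTwoConnectedSet G (insert w {a | a ∈ p.support}) := by
  classical
  set T : Set V := insert w {a | a ∈ p.support} with hT
  have hwT : w ∈ T := Set.mem_insert _ _
  have hsubT : ∀ a ∈ p.support, a ∈ T := fun a ha => Set.mem_insert_of_mem _ ha
  have huT : u ∈ T := hsubT u p.start_mem_support
  have hzT : z ∈ T := hsubT z p.end_mem_support
  have hwu' : w ≠ u := hwu.ne
  have hwz' : w ≠ z := hwz.ne
  refine ⟨?_, ?_, ?_⟩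
  · -- 3 ≤ ncard
    have hsub : ({w, u, z} : Set V) ⊆ T := by
      intro a ha
      rcases ha with rfl | rfl | rfl
      · exact hwT
      · exact huT
      · exact hzT
    have h3 : ({w, u, z} : Set V).ncard = 3 := by
      rw [Set.ncard_insert_of_notMem (by simp [hwu', hwz']),
        Set.ncard_insert_of_notMem (by simp [huz]), Set.ncard_singleton]
    calc 3 = ({w, u, z} : Set V).ncard := h3.symm
      _ ≤ T.ncard := Set.ncard_le_ncard hsub T.toFinite
  · -- connected
    rw [SimpleGraph.connected_iff]
    refine ⟨?_, ⟨⟨w, hwT⟩⟩⟩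
    have key : ∀ a (ha : a ∈ T), (G.induce T).Reachable ⟨a, ha⟩ ⟨u, huT⟩ := by
      intro a ha
      rcases ha with rfl | ha
      · exact ((by exact hwu : (G.induce T).Adj ⟨a, hwT⟩ ⟨u, huT⟩)).reachable
      · have := reachable_induce_of_walk (s := T) (p.takeUntil a ha)
          (fun c hc => hsubT c (p.support_takeUntil_subset ha hc)) huT (hsubT a ha)
        exact this.symm
    intro a b
    exact (key a.1 a.2).trans (key b.1 b.2).symm
  · -- deletion of any vertex
    intro t htT
    rw [SimpleGraph.connected_iff]
    rcases eq_or_ne t w with rfl | htw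
    · -- removing w
      have huT' : u ∈ T \ {t} := ⟨huT, by simpa using hwu'.symm⟩
      refine ⟨?_, ⟨⟨u, huT'⟩⟩⟩
      have key : ∀ a (ha : a ∈ T \ {t}), (G.induce (T \ {t})).Reachable ⟨a, ha⟩ ⟨u, huT'⟩ := by
        intro a ha
        have haS : a ∈ p.support := by
          rcases ha.1 with rfl | h
          · exact absurd rfl ha.2
          · exact h
        have hsub' : ∀ c ∈ (p.takeUntil a haS).support, c ∈ T \ {t} := by
          intro c hc
          have hcS := p.support_takeUntil_subset haS hc
          exact ⟨hsubT c hcS, by rintro rfl; exact hw hcS⟩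
        exact (reachable_induce_of_walk _ hsub' huT'
          (hsub' a (p.takeUntil a haS).end_mem_support)).symm
      intro a b
      exact (key a.1 a.2).trans (key b.1 b.2).symm
    · -- removing t ∈ support
      have htS : t ∈ p.support := by
        rcases htT with rfl | h
        · exact absurd rfl htw
        · exact h
      have hwT' : w ∈ T \ {t} := ⟨hwT, by simpa using (Ne.symm htw)⟩
      refine ⟨?_, ⟨⟨w, hwT'⟩⟩⟩
      have hnodup : p.support.Nodup := hp.support_nodup
      have hsupp_eq : p.support
          = (p.takeUntil t htS).support ++ (p.dropUntil t htS).support.tail := by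
        conv_lhs => rw [← p.take_spec htS]
        exact SimpleGraph.Walk.support_append _ _
      -- part A : vertices on the take part reach u avoiding t
      have keyA : ∀ a (haA : a ∈ (p.takeUntil t htS).support), a ≠ t →
          ∃ (ha' : a ∈ T \ {t}) (hu' : u ∈ T \ {t}),
            (G.induce (T \ {t})).Reachable ⟨a, ha'⟩ ⟨u, hu'⟩ := by
        intro a haA hat
        set q := p.takeUntil t htS with hq
        have hqnodup : q.support.Nodup := (hp.takeUntil htS).support_nodup
        have hqeq : q.support
            = (q.takeUntil a haA).support ++ (q.dropUntil a haA).support.tail := by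
          conv_lhs => rw [← q.take_spec haA]
          exact SimpleGraph.Walk.support_append _ _
        have hdisj : (q.takeUntil a haA).support.Disjoint (q.dropUntil a haA).support.tail := by
          have h2 := hqeq ▸ hqnodup
          exact (List.nodup_append'.mp h2).2.2
        have htnot : t ∉ (q.takeUntil a haA).support := by
          intro hcontr
          have h1 : t ∈ (q.dropUntil a haA).support := (q.dropUntil a haA).end_mem_support
          rw [(q.dropUntil a haA).support_eq_cons] at h1
          rcases List.mem_cons.mp h1 with h1 | h1
          · exact hat h1.symm
          · exact hdisj hcontr h1
        have hsub' : ∀ c ∈ (q.takeUntil a haA).support, c ∈ T \ {t} := by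
          intro c hc
          refine ⟨hsubT c (p.support_takeUntil_subset htS (q.support_takeUntil_subset haA hc)), ?_⟩
          rintro rfl
          exact htnot hc
        have hu' : u ∈ T \ {t} := hsub' u (q.takeUntil a haA).start_mem_support
        have ha' : a ∈ T \ {t} := hsub' a (q.takeUntil a haA).end_mem_support
        exact ⟨ha', hu', (reachable_induce_of_walk _ hsub' hu' ha').symm⟩
      -- part B : vertices on the drop part reach z avoiding t
      have keyB : ∀ a (haB : a ∈ (p.dropUntil t htS).support), a ≠ t →
          ∃ (ha' : a ∈ T \ {t}) (hz' : z ∈ T \ {t}),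
            (G.induce (T \ {t})).Reachable ⟨a, ha'⟩ ⟨z, hz'⟩ := by
        intro a haB hat
        set q := p.dropUntil t htS with hq
        have hqnodup : q.support.Nodup := (hp.dropUntil htS).support_nodup
        have hqeq : q.support
            = (q.takeUntil a haB).support ++ (q.dropUntil a haB).support.tail := by
          conv_lhs => rw [← q.take_spec haB]
          exact SimpleGraph.Walk.support_append _ _
        have hdisj : (q.takeUntil a haB).support.Disjoint (q.dropUntil a haB).support.tail := by
          have h2 := hqeq ▸ hqnodup
          exact (List.nodup_append'.mp h2).2.2
        have htnot : t ∉ (q.dropUntil a haB).support := by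
          intro hcontr
          rw [(q.dropUntil a haB).support_eq_cons] at hcontr
          rcases List.mem_cons.mp hcontr with h1 | h1
          · exact hat h1.symm
          · exact hdisj (q.takeUntil a haB).start_mem_support h1
        have hsub' : ∀ c ∈ (q.dropUntil a haB).support, c ∈ T \ {t} := by
          intro c hc
          refine ⟨hsubT c (p.support_dropUntil_subset htS (q.support_dropUntil_subset haB hc)), ?_⟩
          rintro rfl
          exact htnot hc
        have hz' : z ∈ T \ {t} := hsub' z (q.dropUntil a haB).end_mem_support
        have ha' : a ∈ T \ {t} := hsub' a (q.dropUntil a haB).start_mem_support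
        exact ⟨ha', hz', reachable_induce_of_walk _ hsub' ha' hz'⟩
      -- combine
      have key : ∀ a (ha : a ∈ T \ {t}),
          (G.induce (T \ {t})).Reachable ⟨a, ha⟩ ⟨w, hwT'⟩ := by
        intro a ha
        rcases ha.1 with rfl | haS
        · rfl
        · have hat : a ≠ t := fun h => ha.2 (by simp [h])
          have haS' := hsupp_eq ▸ haS
          rcases List.mem_append.mp haS' with h | h
          · obtain ⟨ha', hu', hr⟩ := keyA a h hat
            have hut : u ≠ t := hu'.2
            have hadj : (G.induce (T \ {t})).Adj ⟨u, hu'⟩ ⟨w, hwT'⟩ := hwu.symm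
            exact (hr.trans hadj.reachable)
          · have h' : a ∈ (p.dropUntil t htS).support := List.mem_of_mem_tail h
            obtain ⟨ha', hz', hr⟩ := keyB a h' hat
            have hadj : (G.induce (T \ {t})).Adj ⟨z, hz'⟩ ⟨w, hwT'⟩ := hwz.symm
            exact (hr.trans hadj.reachable)
      intro a b
      exact (key a.1 a.2).trans (key b.1 b.2).symm

lemma connected_of_not_cutVertex [Finite V] {G : SimpleGraph V} (hconn : G.Connected)
    {w : V} (hw : ¬ IsCutVertex G w) (hne : ({w}ᶜ : Set V).Nonempty) :
    (G.induce ({w}ᶜ : Set V)).Connected := by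
  have h1 : Nat.card G.ConnectedComponent = 1 := by
    rw [Nat.card_eq_one_iff_unique]
    exact ⟨hconn.preconnected.subsingleton_connectedComponent,
      ⟨G.connectedComponentMk hconn.nonempty.some⟩⟩
  have hpos : 0 < Nat.card (G.induce ({w}ᶜ : Set V)).ConnectedComponent := by
    rw [Nat.card_pos_iff]
    exact ⟨⟨(G.induce _).connectedComponentMk ⟨hne.some, hne.some_mem⟩⟩, Quot.finite _⟩
  have hle : Nat.card (G.induce ({w}ᶜ : Set V)).ConnectedComponent = 1 := by
    rw [IsCutVertex, h1] at hw
    omega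
  rw [SimpleGraph.connected_iff]
  obtain ⟨hsub, hne'⟩ := Nat.card_eq_one_iff_unique.mp hle
  refine ⟨fun a b => ?_, ⟨⟨hne.some, hne.some_mem⟩⟩⟩
  have := hsub.elim ((G.induce _).connectedComponentMk a) ((G.induce _).connectedComponentMk b)
  exact (SimpleGraph.ConnectedComponent.eq).mp this

def inclHom (G : SimpleGraph V) (s : Set V) : G.induce s →g G :=
  ⟨Subtype.val, fun {a b} h => h⟩

lemma mem_of_adj_maximalClique [Finite V] {G : SimpleGraph V} (hG : IsBlockGraph G)
    (hconn : G.Connected) {J : Set V} (hJc : G.IsClique J)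
    (hJmax : ∀ R, G.IsClique R → J ⊆ R → J = R) {w : V} (hwJ : w ∈ J)
    (hw : ¬ IsCutVertex G w) {u : V} (hadj : G.Adj w u) : u ∈ J := by
  by_contra huJ
  classical
  have key : ∀ z ∈ J, z ≠ u → G.Adj u z := by
    intro z hzJ hzu
    rcases eq_or_ne z w with rfl | hzw
    · exact hadj.symm
    · have huw : u ∈ ({w}ᶜ : Set V) := by simp [hadj.ne']
      have hzw' : z ∈ ({w}ᶜ : Set V) := by simp [hzw]
      have hcon' := connected_of_not_cutVertex hconn hw ⟨u, huw⟩
      have hreach : (G.induce ({w}ᶜ : Set V)).Reachable ⟨u, huw⟩ ⟨z, hzw'⟩ := hcon' _ _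
      obtain ⟨q⟩ := hreach
      let q' := q.toPath
      have hinj : Function.Injective (inclHom G ({w}ᶜ : Set V)) := Subtype.val_injective
      let p : G.Walk u z := (q'.1.map (inclHom G _))
      have hpath : p.IsPath := SimpleGraph.Walk.map_isPath_of_injective hinj q'.2
      have hwsup : w ∉ p.support := by
        intro hmem
        rw [show p.support = q'.1.support.map (inclHom G _) from SimpleGraph.Walk.support_map _ _] at hmem
        obtain ⟨⟨c, hc⟩, _, hc2⟩ := List.mem_map.mp hmem
        exact hc hc2
      have h2c := cycle_twoConnected p hpath hwsup hadj (hJc hwJ hzJ hzw.symm)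
        (fun h => huJ (h ▸ hzJ))
      have hclq := hG _ h2c
      exact hclq (Set.mem_insert_of_mem _ p.start_mem_support)
        (Set.mem_insert_of_mem _ p.end_mem_support) hzu.symm |>.symm |>.symm
  have hclq : G.IsClique (insert u J) := hJc.insert fun z hz hzu => (key z hz hzu.symm)
  have := hJmax _ hclq (Set.subset_insert _ _)
  exact huJ (this ▸ Set.mem_insert u J)

lemma alphaAt_spec [Finite V] (G : SimpleGraph V) (v : V) :
    (∃ S : Set V, IsIndepSet G S ∧ v ∈ S ∧ S.ncard = alphaAt G v) ∧
    (∀ S : Set V, IsIndepSet G S → v ∈ S → S.ncard ≤ alphaAt G v) := by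
  have hbdd : BddAbove {n : ℕ | ∃ S : Set V, IsIndepSet G S ∧ v ∈ S ∧ S.ncard = n} := by
    refine ⟨Nat.card V, ?_⟩
    rintro n ⟨S, -, -, rfl⟩
    simpa [Set.ncard_univ] using Set.ncard_le_ncard (Set.subset_univ S) Set.finite_univ
  have hne : {n : ℕ | ∃ S : Set V, IsIndepSet G S ∧ v ∈ S ∧ S.ncard = n}.Nonempty :=
    ⟨1, {v}, Set.pairwise_singleton _ _, rfl, Set.ncard_singleton v⟩
  exact ⟨Nat.sSup_mem hne hbdd, fun S h1 h2 => le_csSup hbdd ⟨S, h1, h2, rfl⟩⟩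

lemma alphaMin_le (G : SimpleGraph V) (v : V) : alphaMin G ≤ alphaAt G v :=
  ciInf_le (OrderBot.bddBelow _) v

lemma alphaMin_exists [Nonempty V] (G : SimpleGraph V) :
    ∃ u : V, alphaMin G = alphaAt G u := by
  obtain ⟨u, hu⟩ := Nat.sInf_mem (Set.range_nonempty (alphaAt G))
  exact ⟨u, hu.symm⟩

lemma one_le_alphaAt [Finite V] (G : SimpleGraph V) (v : V) : 1 ≤ alphaAt G v := by
  have := (alphaAt_spec G v).2 {v} (Set.pairwise_singleton _ _) rfl
  simpa using this

theorem remove_pendant_clique_alphaMin {V : Type*} [Fintype V] (G : SimpleGraph V)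
    (hG : IsBlockGraph G) (hconn : G.Connected)
    (v : V) (hv : IsCutVertex G v) (hvmin : alphaAt G v = alphaMin G)
    (x : V) (hxv : x ≠ v) (hx : IsCutVertex G x)
    (J : Set V) (hJ : IsPendantClique G J) (hxJ : x ∈ J)
    (J' : Set V) (hJ' : IsPendantClique G J') (hxJ' : x ∈ J') (hJJ' : J ≠ J')
    (hvmem : v ∈ ((J \ {x})ᶜ : Set V)) :
    alphaAt (G.induce ((J \ {x})ᶜ : Set V)) ⟨v, hvmem⟩
        = alphaMin (G.induce ((J \ {x})ᶜ : Set V)) ∧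
    alphaMin (G.induce ((J \ {x})ᶜ : Set V)) = alphaMin G - 1 := by
  classical
  set Sset : Set V := ((J \ {x})ᶜ : Set V) with hSset
  set H : SimpleGraph ↥Sset := G.induce Sset with hH
  set vH : ↥Sset := ⟨v, hvmem⟩ with hvH
  obtain ⟨⟨hJclique, hJmax⟩, y0, ⟨hy0J, hy0cut⟩, hy0uni⟩ := hJ
  obtain ⟨⟨hJ'clique, hJ'max⟩, y1, ⟨hy1J, hy1cut⟩, hy1uni⟩ := hJ'
  have hxy0 : x = y0 := hy0uni x ⟨hxJ, hx⟩
  have hxy1 : x = y1 := hy1uni x ⟨hxJ', hx⟩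
  have hnoncutJ : ∀ w ∈ J, w ≠ x → ¬ IsCutVertex G w := by
    intro w hwJ hwx hwcut
    exact hwx ((hy0uni w ⟨hwJ, hwcut⟩).trans hxy0.symm)
  have hnoncutJ' : ∀ w ∈ J', w ≠ x → ¬ IsCutVertex G w := by
    intro w hwJ hwx hwcut
    exact hwx ((hy1uni w ⟨hwJ, hwcut⟩).trans hxy1.symm)
  have hnbrJ : ∀ w ∈ J, w ≠ x → ∀ {u : V}, G.Adj w u → u ∈ J := by
    intro w hwJ hwx u hadj
    exact mem_of_adj_maximalClique hG hconn hJclique hJmax hwJ (hnoncutJ w hwJ hwx) hadj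
  have hnbrJ' : ∀ w ∈ J', w ≠ x → ∀ {u : V}, G.Adj w u → u ∈ J' := by
    intro w hwJ hwx u hadj
    exact mem_of_adj_maximalClique hG hconn hJ'clique hJ'max hwJ (hnoncutJ' w hwJ hwx) hadj
  -- x has a neighbor
  have hxnbr : ∃ y, G.Adj x y := by
    obtain ⟨p⟩ := hconn x v
    cases p with
    | nil => exact absurd rfl hxv
    | cons h q => exact ⟨_, h⟩
  -- pendant cliques minus x are nonempty
  have hpc_ne : ∀ Q : Set V, G.IsClique Q → (∀ R : Set V, G.IsClique R → Q ⊆ R → Q = R) →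
      x ∈ Q → (Q \ {x}).Nonempty := by
    intro Q hQc hQmax hxQ
    by_contra hne
    rw [Set.not_nonempty_iff_eq_empty, Set.diff_eq_empty] at hne
    have hQx : Q = {x} := Set.Subset.antisymm hne (by simpa using hxQ)
    obtain ⟨y, hy⟩ := hxnbr
    have hcl : G.IsClique {x, y} := SimpleGraph.isClique_pair.mpr fun _ => hy
    have := hQmax {x, y} hcl (by rw [hQx]; simp)
    rw [hQx] at this
    have : y ∈ ({x} : Set V) := this ▸ (by simp : y ∈ ({x, y} : Set V))
    exact hy.ne (by simpa using this.symm)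
  have hKne : (J \ {x}).Nonempty := hpc_ne J hJclique hJmax hxJ
  have hK'ne : (J' \ {x}).Nonempty := hpc_ne J' hJ'clique hJ'max hxJ'
  -- J' \ {x} is disjoint from J
  have hsep : ∀ a ∈ J' \ {x}, a ∉ J := by
    rintro a ⟨haJ', hax⟩ haJ
    have hax' : a ≠ x := by simpa using hax
    apply hJJ'
    apply Set.Subset.antisymm
    · intro z hzJ
      rcases eq_or_ne z a with rfl | hza
      · exact haJ'
      · exact hnbrJ' a haJ' hax' (hJclique haJ hzJ hza.symm)
    · intro z hzJ'
      rcases eq_or_ne z a with rfl | hza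
      · exact haJ
      · exact hnbrJ a haJ hax' (hJ'clique haJ' hzJ' hza.symm)
  -- Claim 1: for every u in H, alphaAt G u ≤ alphaAt H u + 1
  have claim1 : ∀ u : ↥Sset, alphaAt G u.val ≤ alphaAt H u + 1 := by
    intro u
    obtain ⟨⟨T, hTind, huT, hTcard⟩, -⟩ := alphaAt_spec G u.val
    set T' : Set ↥Sset := Subtype.val ⁻¹' T with hT'
    have hT'ind : IsIndepSet H T' := by
      intro a ha b hb hab
      exact hTind ha hb (fun h => hab (Subtype.ext h))
    have hT'card : T'.ncard = (T ∩ Sset).ncard := by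
      rw [← Set.ncard_image_of_injective T' Subtype.val_injective, hT',
        Subtype.image_preimage_coe, Set.inter_comm]
    have hsplit : T.ncard ≤ (T ∩ Sset).ncard + 1 := by
      have hsub : T ⊆ (T ∩ Sset) ∪ (T ∩ (J \ {x})) := by
        intro a ha
        by_cases h : a ∈ Sset
        · exact Or.inl ⟨ha, h⟩
        · exact Or.inr ⟨ha, by simpa [hSset] using h⟩
      have hss : (T ∩ (J \ {x})).Subsingleton := by
        intro a ha b hb
        by_contra hab
        exact hTind ha.1 hb.1 hab (hJclique ha.2.1 hb.2.1 hab)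
      have h1 : (T ∩ (J \ {x})).ncard ≤ 1 := (Set.ncard_le_one (Set.toFinite _)).mpr hss
      calc T.ncard ≤ ((T ∩ Sset) ∪ (T ∩ (J \ {x}))).ncard :=
            Set.ncard_le_ncard hsub (Set.toFinite _)
        _ ≤ (T ∩ Sset).ncard + (T ∩ (J \ {x})).ncard := Set.ncard_union_le _ _
        _ ≤ (T ∩ Sset).ncard + 1 := by omega
    have := (alphaAt_spec H u).2 T' hT'ind (by exact huT)
    omega
  -- Claim 2: alphaAt H vH + 1 ≤ alphaAt G v
  have claim2 : alphaAt H vH + 1 ≤ alphaAt G v := by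
    obtain ⟨⟨T, hTind, hvT, hTcard⟩, -⟩ := alphaAt_spec H vH
    set Tv : Set V := Subtype.val '' T with hTv
    have hTvind : IsIndepSet G Tv := by
      rintro a ⟨a', ha', rfl⟩ b ⟨b', hb', rfl⟩ hab
      exact hTind ha' hb' (fun h => hab (by rw [h]))
    have hTvcard : Tv.ncard = T.ncard := Set.ncard_image_of_injective _ Subtype.val_injective
    have hTvS : Tv ⊆ Sset := by rintro a ⟨a', -, rfl⟩; exact a'.2
    have hvTv : v ∈ Tv := ⟨vH, hvT, rfl⟩
    -- produce U : indep, v ∈ U, same card, disjoint from J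
    obtain ⟨U, hUind, hvU, hUcard, hUJ⟩ :
        ∃ U : Set V, IsIndepSet G U ∧ v ∈ U ∧ U.ncard = Tv.ncard ∧ ∀ a ∈ U, a ∉ J := by
      by_cases hxTv : x ∈ Tv
      · obtain ⟨w', hw'⟩ := hK'ne
        have hw'J' : w' ∈ J' := hw'.1
        have hw'x : w' ≠ x := by simpa using hw'.2
        have hw'Tv : w' ∉ Tv := by
          intro h
          exact hTvind h hxTv hw'x (hJ'clique hw'J' hxJ' hw'x)
        have hsymm : Symmetric (fun a b : V => ¬ G.Adj a b) := fun a b h h' => h h'.symm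
        refine ⟨insert w' (Tv \ {x}), ?_, ?_, ?_, ?_⟩
        · haveI : Std.Symm (fun a b : V => ¬ G.Adj a b) := ⟨fun a b h => hsymm h⟩
          rw [IsIndepSet, Set.pairwise_insert_of_symm]
          refine ⟨hTvind.mono Set.diff_subset, ?_⟩
          rintro b ⟨hbTv, hbx⟩ hw'b hadj
          have hbJ' : b ∈ J' := hnbrJ' w' hw'J' hw'x hadj
          have hbx' : b ≠ x := by simpa using hbx
          exact hTvind hbTv hxTv hbx' (hJ'clique hbJ' hxJ' hbx')
        · exact Set.mem_insert_of_mem _ ⟨hvTv, by simpa using hxv.symm⟩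
        · rw [Set.ncard_insert_of_notMem (fun h => hw'Tv h.1) (Set.toFinite _),
            Set.ncard_diff_singleton_of_mem hxTv]
          have : 0 < Tv.ncard := (Set.ncard_pos (Set.toFinite _)).mpr ⟨x, hxTv⟩
          omega
        · rintro a (rfl | ⟨haTv, hax⟩)
          · exact hsep a hw'
          · intro haJ
            have := hTvS haTv
            rw [hSset] at this
            exact this ⟨haJ, hax⟩
      · refine ⟨Tv, hTvind, hvTv, rfl, ?_⟩
        intro a haTv haJ
        have := hTvS haTv
        rw [hSset] at this
        exact this ⟨haJ, fun h => hxTv (h ▸ haTv)⟩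
    obtain ⟨w, hw⟩ := hKne
    have hwJ : w ∈ J := hw.1
    have hwx : w ≠ x := by simpa using hw.2
    have hwU : w ∉ U := fun h => hUJ w h hwJ
    have hsymm : Symmetric (fun a b : V => ¬ G.Adj a b) := fun a b h h' => h h'.symm
    have hU'ind : IsIndepSet G (insert w U) := by
      haveI : Std.Symm (fun a b : V => ¬ G.Adj a b) := ⟨fun a b h => hsymm h⟩
      rw [IsIndepSet, Set.pairwise_insert_of_symm]
      refine ⟨hUind, ?_⟩
      intro b hbU hwb hadj
      exact hUJ b hbU (hnbrJ w hwJ hwx hadj)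
    have hle := (alphaAt_spec G v).2 (insert w U) hU'ind (Set.mem_insert_of_mem _ hvU)
    rw [Set.ncard_insert_of_notMem hwU (Set.toFinite _)] at hle
    omega
  -- assemble
  have hSne : Nonempty ↥Sset := ⟨vH⟩
  obtain ⟨u0, hu0⟩ := alphaMin_exists H
  have c1 : alphaMin G ≤ alphaAt G u0.val := alphaMin_le G u0.val
  have c2 : alphaAt G u0.val ≤ alphaAt H u0 + 1 := claim1 u0
  have c3 : alphaMin H ≤ alphaAt H vH := alphaMin_le H vH
  have c4 : alphaAt H vH + 1 ≤ alphaMin G := hvmin ▸ claim2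
  rw [← hu0] at c2
  constructor
  · omega
  · omega

end BlockGraphPaper
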